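/- Let m ≥ 2 be even, n divisible by m/2, N = 2n/m, and let k be an integer with 2 ≤ k ≤ N/2. The Pareto front F of m-OJZJ_k has cardinality |F| = (N − 2k + 3)^{m/2}. -/

import Mathlib

/-- Number of one-bits of a block `b ∈ {0,1}^N`. -/
def ones {N : ℕ} (b : Fin N → Bool) : ℕ :=
  (Finset.univ.filter fun i => b i = true).card

/-- Number of zero-bits of a block `b ∈ {0,1}^N`. -/
def zeros {N : ℕ} (b : Fin N → Bool) : ℕ :=
  (Finset.univ.filter fun i => b i = false).card

/-- A search point in `{0,1}^n` with `n = M * N`, presented as `M` blocks of length `N`. -/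
abbrev Point (M N : ℕ) := Fin M → Fin N → Bool

/-- The `m`-objective function `m`-OJZJ_k with `m = 2 * M` objectives (0-indexed:
objective `i` corresponds to the 1-indexed objective `i+1`, so even `i` is the
"ones" objective and odd `i` the "zeros" objective of block `i / 2`). -/
def mOJZJ (N k : ℕ) {M : ℕ} (x : Point M N) (i : Fin (2 * M)) : ℕ :=
  let b := x ⟨i.val / 2, by have := i.isLt; omega⟩
  if i.val % 2 = 0 then
    if ones b ≤ N - k ∨ ones b = N then k + ones b else N - ones b
  else
    if zeros b ≤ N - k ∨ zeros b = N then k + zeros b else N - zeros b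

/-- `x` weakly dominates `y`. -/
def weaklyDom (N k : ℕ) {M : ℕ} (x y : Point M N) : Prop :=
  ∀ i, mOJZJ N k y i ≤ mOJZJ N k x i

/-- `x` dominates `y`. -/
def dom (N k : ℕ) {M : ℕ} (x y : Point M N) : Prop :=
  weaklyDom N k x y ∧ ∃ i, mOJZJ N k y i < mOJZJ N k x i

/-- `x` is Pareto-optimal: no search point dominates it. -/
def paretoOptimal (N k : ℕ) {M : ℕ} (x : Point M N) : Prop :=
  ¬ ∃ y : Point M N, dom N k y x

/-- The Pareto front: the set of fitness vectors of Pareto-optimal search points. -/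
def paretoFront (N k M : ℕ) : Set (Fin (2 * M) → ℕ) :=
  {v | ∃ x : Point M N, paretoOptimal N k x ∧ mOJZJ N k x = v}

/-!
Objectives `2j` and `2j+1` depend only on the number `o` of ones in block `j`, through
`jump o` and `jump (N - o)`. Their sum is at most `N + 2k`, with equality exactly for
`o ∈ {0, N} ∪ [k, N - k]`; for the other `o` a block with `k` ones is strictly better in both
objectives. So a point is Pareto-optimal iff all its block counts lie in this set of size
`N - 2k + 3`, and on such points the fitness vector determines the counts.
-/

open Finset

theorem ones_add_zeros {N : ℕ} (b : Fin N → Bool) : ones b + zeros b = N := by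
  simpa [ones, zeros] using
    card_filter_add_card_filter_not (s := (univ : Finset (Fin N))) (fun i => b i = true)

theorem ones_le {N : ℕ} (b : Fin N → Bool) : ones b ≤ N := by
  have := ones_add_zeros b
  omega

theorem zeros_eq_sub_ones {N : ℕ} (b : Fin N → Bool) : zeros b = N - ones b := by
  have := ones_add_zeros b
  omega

def block (N o : ℕ) : Fin N → Bool := fun i => decide (i.val < o)

theorem ones_block {N o : ℕ} (ho : o ≤ N) : ones (block N o) = o := by
  have : (univ.filter fun i : Fin N => block N o i = true) = (range o).attachFin
      (fun _ hi => (List.mem_range.mp hi).trans_le ho) := by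
    ext i
    simp [block]
  simp [ones, this]

section Jump

variable {N k o : ℕ}

def jump (N k o : ℕ) : ℕ := if o ≤ N - k ∨ o = N then k + o else N - o

def optimalCounts (N k : ℕ) : Finset ℕ := insert 0 (insert N (Icc k (N - k)))

theorem mem_optimalCounts : o ∈ optimalCounts N k ↔ o = 0 ∨ o = N ∨ k ≤ o ∧ o ≤ N - k := by
  simp [optimalCounts]

theorem card_optimalCounts (hk : 0 < k) (hkN : 2 * k ≤ N) :
    (optimalCounts N k).card = N - 2 * k + 3 := by
  rw [optimalCounts, card_insert_of_notMem, card_insert_of_notMem, Nat.card_Icc]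
  · omega
  · simp only [mem_Icc]; omega
  · simp only [mem_insert, mem_Icc]; omega

theorem le_of_mem_optimalCounts (ho : o ∈ optimalCounts N k) : o ≤ N := by
  rw [mem_optimalCounts] at ho
  omega

theorem sub_mem_optimalCounts (ho : o ∈ optimalCounts N k) : N - o ∈ optimalCounts N k := by
  rw [mem_optimalCounts] at ho ⊢
  omega

theorem jump_of_mem_optimalCounts (ho : o ∈ optimalCounts N k) : jump N k o = k + o := by
  rw [mem_optimalCounts] at ho
  unfold jump
  split_ifs <;> omega

theorem jump_add_jump_sub_le (hkN : 2 * k ≤ N) : jump N k o + jump N k (N - o) ≤ N + 2 * k := by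
  unfold jump
  split_ifs <;> omega

theorem jump_add_jump_sub_of_mem (ho : o ∈ optimalCounts N k) :
    jump N k o + jump N k (N - o) = N + 2 * k := by
  rw [jump_of_mem_optimalCounts ho, jump_of_mem_optimalCounts (sub_mem_optimalCounts ho)]
  have := le_of_mem_optimalCounts ho
  omega

theorem jump_lt_of_notMem (hkN : 2 * k ≤ N) (ho : o ≤ N) (h : o ∉ optimalCounts N k) :
    jump N k o < jump N k k ∧ jump N k (N - o) < jump N k (N - k) := by
  have hkN' : k ∈ optimalCounts N k := mem_optimalCounts.mpr (by omega)
  rw [jump_of_mem_optimalCounts hkN', jump_of_mem_optimalCounts (sub_mem_optimalCounts hkN')]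
  rw [mem_optimalCounts] at h
  unfold jump
  split_ifs <;> omega

end Jump

section Objectives

variable {M N : ℕ}

def onesObj (j : Fin M) : Fin (2 * M) := ⟨2 * j, by omega⟩

def zerosObj (j : Fin M) : Fin (2 * M) := ⟨2 * j + 1, by omega⟩

theorem exists_eq_onesObj_or_eq_zerosObj (i : Fin (2 * M)) :
    ∃ j : Fin M, i = onesObj j ∨ i = zerosObj j :=
  ⟨⟨i / 2, by omega⟩, by simp only [onesObj, zerosObj, Fin.ext_iff]; omega⟩

variable (k : ℕ) (x : Point M N) (j : Fin M)

theorem mOJZJ_onesObj : mOJZJ N k x (onesObj j) = jump N k (ones (x j)) := by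
  simp [mOJZJ, onesObj, jump]

theorem mOJZJ_zerosObj : mOJZJ N k x (zerosObj j) = jump N k (N - ones (x j)) := by
  have hj : (⟨(2 * j + 1) / 2, by omega⟩ : Fin M) = j := Fin.ext (by dsimp only; omega)
  simp [mOJZJ, zerosObj, jump, hj, zeros_eq_sub_ones]

theorem mOJZJ_congr {y : Point M N} (h : ∀ j, ones (x j) = ones (y j)) :
    mOJZJ N k x = mOJZJ N k y := by
  funext i
  obtain ⟨j, rfl | rfl⟩ := exists_eq_onesObj_or_eq_zerosObj i <;>
    simp [mOJZJ_onesObj, mOJZJ_zerosObj, h]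

theorem weaklyDom_iff {y : Point M N} : weaklyDom N k x y ↔ ∀ j,
    jump N k (ones (y j)) ≤ jump N k (ones (x j)) ∧
      jump N k (N - ones (y j)) ≤ jump N k (N - ones (x j)) := by
  refine ⟨fun h j => ?_, fun h i => ?_⟩
  · simpa only [mOJZJ_onesObj, mOJZJ_zerosObj] using And.intro (h (onesObj j)) (h (zerosObj j))
  · obtain ⟨j, rfl | rfl⟩ := exists_eq_onesObj_or_eq_zerosObj i
    · simpa only [mOJZJ_onesObj] using (h j).1
    · simpa only [mOJZJ_zerosObj] using (h j).2

end Objectives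

section Pareto

variable {M N k : ℕ}

theorem dom_update_block (hkN : 2 * k ≤ N) (x : Point M N) {j : Fin M}
    (hj : ones (x j) ∉ optimalCounts N k) : dom N k (Function.update x j (block N k)) x := by
  have hk : ones (block N k) = k := ones_block (by omega)
  have hlt := jump_lt_of_notMem hkN (ones_le _) hj
  refine ⟨(weaklyDom_iff k _).mpr fun j' => ?_, onesObj j, ?_⟩
  · rcases eq_or_ne j' j with rfl | hne
    · rw [Function.update_self, hk]
      exact ⟨hlt.1.le, hlt.2.le⟩
    · simp only [Function.update_of_ne hne, le_rfl, and_self]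
  · rw [mOJZJ_onesObj, mOJZJ_onesObj, Function.update_self, hk]
    exact hlt.1

theorem not_dom_of_forall_mem (hkN : 2 * k ≤ N) {x : Point M N}
    (hx : ∀ j, ones (x j) ∈ optimalCounts N k) (y : Point M N) : ¬ dom N k y x := by
  rintro ⟨hyx, i, hi⟩
  obtain ⟨j, rfl | rfl⟩ := exists_eq_onesObj_or_eq_zerosObj i <;>
  · simp only [mOJZJ_onesObj, mOJZJ_zerosObj] at hi
    have hle := (weaklyDom_iff k y).mp hyx j
    have hy := jump_add_jump_sub_le hkN (o := ones (y j))
    have hx := jump_add_jump_sub_of_mem (hx j)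
    omega

theorem paretoOptimal_iff (hkN : 2 * k ≤ N) (x : Point M N) :
    paretoOptimal N k x ↔ ∀ j, ones (x j) ∈ optimalCounts N k :=
  ⟨fun h _ => by_contra fun hj => h ⟨_, dom_update_block hkN x hj⟩,
    fun hx ⟨y, hy⟩ => not_dom_of_forall_mem hkN hx y hy⟩

theorem paretoFront_eq_image (hkN : 2 * k ≤ N) :
    paretoFront N k M = (fun c : Fin M → ℕ => mOJZJ N k fun j => block N (c j)) ''
      ↑(Fintype.piFinset fun _ : Fin M => optimalCounts N k) := by
  ext v
  simp only [paretoFront, paretoOptimal_iff hkN, Set.mem_ofPred_eq, Set.mem_image, mem_coe,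
    Fintype.mem_piFinset]
  constructor
  · rintro ⟨x, hx, rfl⟩
    exact ⟨fun j => ones (x j), hx, mOJZJ_congr k _ fun j => ones_block (ones_le _)⟩
  · rintro ⟨c, hc, rfl⟩
    refine ⟨_, fun j => ?_, rfl⟩
    rw [ones_block (le_of_mem_optimalCounts (hc j))]
    exact hc j

theorem injOn_mOJZJ_block :
    Set.InjOn (fun c : Fin M → ℕ => mOJZJ N k fun j => block N (c j))
      ↑(Fintype.piFinset fun _ : Fin M => optimalCounts N k) := by
  intro c hc c' hc' h
  simp only [mem_coe, Fintype.mem_piFinset] at hc hc'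
  funext j
  have hj := congrFun h (onesObj j)
  simp only [mOJZJ_onesObj] at hj
  rw [ones_block (le_of_mem_optimalCounts (hc j)), ones_block (le_of_mem_optimalCounts (hc' j)),
    jump_of_mem_optimalCounts (hc j), jump_of_mem_optimalCounts (hc' j)] at hj
  omega

theorem ncard_paretoFront (hk : 0 < k) (hkN : 2 * k ≤ N) :
    (paretoFront N k M).ncard = (N - 2 * k + 3) ^ M := by
  rw [paretoFront_eq_image hkN, injOn_mOJZJ_block.ncard_image, Set.ncard_coe_finset,
    Fintype.card_piFinset, prod_const, card_optimalCounts hk hkN, card_univ, Fintype.card_fin]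

end Pareto

theorem pareto_front_card_general (m N k : ℕ) (hk2 : 2 ≤ k) (hkN : k ≤ N / 2) :
    (paretoFront N k (m / 2)).ncard = (N - 2 * k + 3) ^ (m / 2) :=
  ncard_paretoFront (by omega) (by omega)

/-- the Pareto front of `m`-OJZJ_k has cardinality `(N − 2k + 3)^(m/2)`. -/
theorem pareto_front_card (m n N k : ℕ) (hm : 2 ≤ m) (hme : m % 2 = 0)
    (hn : 0 < n) (hdvd : m / 2 ∣ n) (hN : N = 2 * n / m)
    (hk2 : 2 ≤ k) (hkN : k ≤ N / 2) :
    (paretoFront N k (m / 2)).ncard = (N - 2 * k + 3) ^ (m / 2) :=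
  pareto_front_card_general m N k hk2 hkN
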